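/- arXiv:2103.08544 — 6 statements merged into one kernel-verified Lean document; each statement's English description precedes it below -/
import Mathlib

section
/- Let M ∈ K^{m×m} be an invertible companion matrix, γ ∈ K^×, and E(γ) the rank-one matrix with rows (γ^{m-1},…,γ,1), (-γ^m,…,-γ), 0,…,0. Then for all integers r with 0 ≤ r ≤ m-2, Tr(M^r · E(γ)^t) = 0; i.e., E(γ) is trace-orthogonal to I, M, …, M^{m-2}. -/
open Matrix

/-- The companion matrix of `x^m - a_m x^{m-1} - ⋯ - a_2 x - a_1`, whose bottom row is
`(a_1, …, a_m)` and which has ones on the superdiagonal. -/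
def companionMat {K : Type*} [Field K] {m : ℕ} (a : Fin m → K) : Matrix (Fin m) (Fin m) K :=
  Matrix.of fun i j => if (i : ℕ) + 1 = m then a j else if (j : ℕ) = (i : ℕ) + 1 then 1 else 0

/-- The rank-one matrix `E(γ)` with first row `(γ^{m-1}, …, γ, 1)`, second row
`(-γ^m, …, -γ², -γ)`, and all other rows zero. -/
def Egamma {K : Type*} [Field K] (m : ℕ) (γ : K) : Matrix (Fin m) (Fin m) K :=
  Matrix.of fun i j =>
    if (i : ℕ) = 0 then γ ^ (m - 1 - (j : ℕ))
    else if (i : ℕ) = 1 then -γ ^ (m - (j : ℕ)) else 0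

/-
Every row `i` of `M` above the last one is the unit vector `e_{i+1}`, so every row `i` of `M^r`
with `i + r < m` is `e_{i+r}`. Since `Tr(A Bᵀ) = ∑ᵢ ⟪Aᵢ, Bᵢ⟫` and only the first two rows of
`E(γ)` are nonzero, `Tr(M^r E(γ)ᵀ) = E(γ)₀,ᵣ + E(γ)₁,₁₊ᵣ = γ^{m-1-r} - γ^{m-1-r}` for `r ≤ m - 2`.
-/

theorem Matrix.trace_mul_transpose_eq_sum_dotProduct {n p R : Type*} [Fintype n] [Fintype p]
    [AddCommMonoid R] [Mul R] (A B : Matrix n p R) :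
    trace (A * Bᵀ) = ∑ i, A i ⬝ᵥ B i :=
  rfl

section Companion

variable {K : Type*} [Field K] {m : ℕ} (a : Fin m → K)

theorem companionMat_row_of_lt (i : Fin m) (hi : (i : ℕ) + 1 < m) :
    companionMat a i = Pi.single ⟨i + 1, hi⟩ 1 := by
  ext j
  simp only [companionMat, of_apply, Pi.single_apply, Fin.ext_iff, if_neg hi.ne]

theorem companionMat_pow_row_of_lt (r : ℕ) (i : Fin m) (hi : (i : ℕ) + r < m) :
    (companionMat a ^ r) i = Pi.single ⟨i + r, hi⟩ 1 := by
  induction r with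
  | zero => ext j; simp [one_apply, Pi.single_apply, eq_comm]
  | succ r ih =>
    rw [pow_succ, mul_apply_eq_vecMul, ih (by omega), single_one_vecMul, row,
      companionMat_row_of_lt a _ (by simpa [← add_assoc] using hi)]
    rfl

end Companion

theorem Egamma_row_eq_zero {K : Type*} [Field K] (m : ℕ) (γ : K) (i : Fin m) (hi : 2 ≤ (i : ℕ)) :
    Egamma m γ i = 0 := by
  ext j
  simp [Egamma, show (i : ℕ) ≠ 0 by omega, show (i : ℕ) ≠ 1 by omega]

theorem stmt8_general {K : Type*} [Field K] {m : ℕ} (hm : 2 ≤ m)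
    (a : Fin m → K) (γ : K) :
    ∀ r : ℕ, r ≤ m - 2 →
      Matrix.trace ((companionMat a) ^ r * (Egamma m γ)ᵀ) = 0 := by
  intro r hr
  let i₀ : Fin m := ⟨0, by omega⟩
  let i₁ : Fin m := ⟨1, by omega⟩
  have h_other_rows : ∀ i ∈ Finset.univ, i ≠ i₀ ∧ i ≠ i₁ →
      (companionMat a ^ r) i ⬝ᵥ Egamma m γ i = 0 := by
    rintro i - ⟨h₀, h₁⟩
    simp only [i₀, i₁, ne_eq, Fin.ext_iff] at h₀ h₁
    rw [Egamma_row_eq_zero m γ i (by omega), dotProduct_zero]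
  rw [trace_mul_transpose_eq_sum_dotProduct,
    Finset.sum_eq_add i₀ i₁ (by simp [i₀, i₁, Fin.ext_iff]) h_other_rows (by simp) (by simp),
    companionMat_pow_row_of_lt a r i₀ (by simp [i₀]; omega),
    companionMat_pow_row_of_lt a r i₁ (by simp [i₁]; omega),
    single_one_dotProduct, single_one_dotProduct]
  simp [Egamma, i₀, i₁, Nat.sub_sub, add_comm]

theorem stmt8 {K : Type*} [Field K] {m : ℕ} [NeZero m] (hm : 2 ≤ m)
    (a : Fin m → K) (ha : a 0 ≠ 0) (γ : K) (hγ : γ ≠ 0) :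
    ∀ r : ℕ, r ≤ m - 2 →
      Matrix.trace ((companionMat a) ^ r * (Egamma m γ)ᵀ) = 0 :=
  stmt8_general hm a γ
end

section
/- Let M ∈ K^{m×m} be an invertible companion matrix and 1 ≤ s ≤ m-1. For every j with s+1 ≤ j ≤ m and every i with 0 ≤ i ≤ m-1, the rank-one matrix J^i E_{1,j} (M^{-i})^t is trace-orthogonal to M^r for all 0 ≤ r ≤ s-1, i.e., Tr(M^r (J^i E_{1,j} (M^{-i})^t)^t) = 0. -/
open Matrix

/-- The cyclic permutation matrix `J` shifting rows downward. -/
def cyclicJ (K : Type*) [Field K] (m : ℕ) [NeZero m] : Matrix (Fin m) (Fin m) K :=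
  Matrix.of fun i j => if i = j + 1 then 1 else 0

theorem rank_single_of_ne_zero {K ι κ : Type*} [Field K] [Fintype ι] [Fintype κ]
    [DecidableEq ι] [DecidableEq κ] (i : ι) (j : κ) {c : K} (hc : c ≠ 0) :
    (single i j c).rank = 1 := by
  refine le_antisymm ?_ ?_
  · have : single i j c = vecMulVec (Pi.single i c) (Pi.single j 1) := by
      ext x y
      simp only [vecMulVec, single_apply, Pi.single_apply, of_apply]
      split_ifs <;> simp_all
    exact this ▸ rank_vecMulVec_le _ _
  · rw [Matrix.rank, Submodule.one_le_finrank_iff, Submodule.ne_bot_iff]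
    refine ⟨Pi.single i c, ⟨Pi.single j 1, ?_⟩, by simpa using hc⟩
    ext x
    simp [single_apply, Pi.single_apply, eq_comm]

theorem trace_mul_transpose_single_mul_transpose {R ι : Type*} [CommSemiring R] [Fintype ι]
    [DecidableEq ι] (A B : Matrix ι ι R) (p q : ι) (c : R) :
    trace (A * (single p q c * Bᵀ)ᵀ) = (A * B) p q * c := by
  rw [transpose_mul, transpose_single, transpose_transpose, ← mul_assoc, trace_mul_single]
  simp [mul_comm]

section cyclicJ

variable {K : Type*} [Field K] {m : ℕ} [NeZero m]

theorem cyclicJ_mul_apply (A : Matrix (Fin m) (Fin m) K) (x y : Fin m) :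
    (cyclicJ K m * A) x y = A (x - 1) y := by
  simp [cyclicJ, mul_apply, ← sub_eq_iff_eq_add]

theorem cyclicJ_mul_single (p q : Fin m) (c : K) :
    cyclicJ K m * single p q c = single (p + 1) q c := by
  ext x y
  simp only [cyclicJ_mul_apply, single_apply, eq_sub_iff_add_eq]

open Fin.NatCast in
theorem cyclicJ_pow_mul_single (i : ℕ) (p q : Fin m) (c : K) :
    cyclicJ K m ^ i * single p q c = single (p + i) q c := by
  induction i with
  | zero => simp
  | succ i ih => rw [pow_succ', mul_assoc, ih, cyclicJ_mul_single, Nat.cast_succ, add_assoc]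

end cyclicJ

section companionMat

variable {K : Type*} [Field K]

theorem det_companionMat {n : ℕ} (a : Fin (n + 1) → K) :
    (companionMat a).det = (-1) ^ n * a 0 := by
  rw [det_succ_column_zero, Finset.sum_eq_single (Fin.last n)]
  · have hminor : (companionMat a).submatrix (Fin.last n).succAbove Fin.succ = 1 := by
      ext p q
      simp [companionMat, one_apply, Fin.ext_iff, p.isLt.ne', eq_comm]
    rw [hminor, det_one]
    simp [companionMat]
  · intro b _ hb
    have : (b : ℕ) ≠ n := fun h => hb (Fin.ext h)
    simp [companionMat, this]
  · simp

theorem isUnit_det_companionMat {m : ℕ} [NeZero m] {a : Fin m → K} (ha : a 0 ≠ 0) :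
    IsUnit (companionMat a).det := by
  obtain ⟨n, rfl⟩ : ∃ n, m = n + 1 := Nat.exists_eq_succ_of_ne_zero (NeZero.ne m)
  rw [det_companionMat, isUnit_iff_ne_zero]
  exact mul_ne_zero (pow_ne_zero _ (neg_ne_zero.2 one_ne_zero)) ha

variable {m : ℕ} [NeZero m] (a : Fin m → K)

theorem companionMat_pow_apply_zero {t : ℕ} (ht : t < m) (q : Fin m) :
    (companionMat a ^ t) 0 q = if (q : ℕ) = t then 1 else 0 := by
  induction t generalizing q with
  | zero =>
    rw [pow_zero, one_apply]
    exact if_congr (eq_comm.trans Fin.val_eq_zero_iff.symm) rfl rfl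
  | succ t ih =>
    have htm : t < m := by omega
    rw [pow_succ, mul_apply, Finset.sum_eq_single ⟨t, htm⟩, ih htm]
    · simp [companionMat, show t + 1 ≠ m by omega]
    · intro k _ hk
      rw [ih htm, if_neg (Fin.ext_iff.not.mp hk), zero_mul]
    · simp

theorem companionMat_pow_mul_apply_zero {t : ℕ} (ht : t < m) (A : Matrix (Fin m) (Fin m) K)
    (q : Fin m) : (companionMat a ^ t * A) 0 q = A ⟨t, ht⟩ q := by
  rw [mul_apply, Finset.sum_eq_single ⟨t, ht⟩]
  · simp [companionMat_pow_apply_zero a ht]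
  · intro k _ hk
    rw [companionMat_pow_apply_zero a ht, if_neg (Fin.ext_iff.not.mp hk), zero_mul]
  · simp

end companionMat

theorem pow_mul_mul_inv_pow {R ι : Type*} [CommRing R] [Fintype ι] [DecidableEq ι]
    {A : Matrix ι ι R} (hA : IsUnit A.det) (B : Matrix ι ι R) (hB : Commute A B) (i : ℕ) :
    A ^ i * (B * A⁻¹ ^ i) = B := by
  rw [inv_pow', ← mul_assoc, (hB.pow_left i).eq, mul_nonsing_inv_cancel_right]
  simpa only [det_pow] using hA.pow i

/-- `Matrix.single 0 j 1` is `E_{1,j}`: indices are 0-based, so `s+1 ≤ j ≤ m` reads `s ≤ j`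
here. -/
theorem stmt9_general {K : Type*} [Field K] {m s : ℕ} [NeZero m]
    (a : Fin m → K) (ha : a 0 ≠ 0) (hs1 : 1 ≤ s)
    (j : Fin m) (hj : s ≤ (j : ℕ)) (i : ℕ) (hi : i ≤ m - 1) :
    ((cyclicJ K m) ^ i * Matrix.single 0 j 1 * (((companionMat a)⁻¹) ^ i)ᵀ).rank = 1 ∧
    ∀ r : ℕ, r ≤ s - 1 →
      Matrix.trace ((companionMat a) ^ r *
        ((cyclicJ K m) ^ i * Matrix.single 0 j 1 * (((companionMat a)⁻¹) ^ i)ᵀ)ᵀ) = 0 := by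
  have him : i < m := by have := NeZero.pos m; omega
  have hM := isUnit_det_companionMat ha
  have hJE : cyclicJ K m ^ i * single 0 j 1 = single ⟨i, him⟩ j (1 : K) := by
    rw [cyclicJ_pow_mul_single, zero_add, Fin.natCast_eq_mk him]
  rw [hJE]
  set M := companionMat a
  refine ⟨?_, fun r hr => ?_⟩
  · rw [rank_mul_eq_left_of_isUnit_det _ _ (by simpa using (isUnit_nonsing_inv_det _ hM).pow i)]
    exact rank_single_of_ne_zero _ _ one_ne_zero
  · calc trace (M ^ r * (single ⟨i, him⟩ j 1 * (M⁻¹ ^ i)ᵀ)ᵀ)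
        = (M ^ r * M⁻¹ ^ i) ⟨i, him⟩ j := by
          rw [trace_mul_transpose_single_mul_transpose, mul_one]
      _ = (M ^ i * (M ^ r * M⁻¹ ^ i)) 0 j := (companionMat_pow_mul_apply_zero a him _ j).symm
      _ = (M ^ r) 0 j := by rw [pow_mul_mul_inv_pow hM _ (Commute.self_pow M r)]
      _ = 0 := by rw [companionMat_pow_apply_zero a (by omega), if_neg (by omega)]

/-- `stdBasisMatrix 0 j 1` is the matrix unit `E_{1,j}` (in 1-based numbering: `s+1 ≤ j ≤ m`
becomes `s ≤ j ≤ m-1` for 0-based `j`). -/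
theorem stmt9 {K : Type*} [Field K] {m s : ℕ} [NeZero m]
    (a : Fin m → K) (ha : a 0 ≠ 0) (hs1 : 1 ≤ s) (hsm : s ≤ m - 1)
    (j : Fin m) (hj : s ≤ (j : ℕ)) (i : ℕ) (hi : i ≤ m - 1) :
    ((cyclicJ K m) ^ i * Matrix.single 0 j 1 * (((companionMat a)⁻¹) ^ i)ᵀ).rank = 1 ∧
    ∀ r : ℕ, r ≤ s - 1 →
      Matrix.trace ((companionMat a) ^ r *
        ((cyclicJ K m) ^ i * Matrix.single 0 j 1 * (((companionMat a)⁻¹) ^ i)ᵀ)ᵀ) = 0 :=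
  stmt9_general a ha hs1 j hj i hi
end

section
/- Let a_1, a_2 ∈ K with a_1 ≠ 0 and let M = [[0,1],[a_1,a_2]] ∈ K^{2×2}. If the polynomial a_1 x² + a_2 x − 1 has two distinct roots γ_1, γ_2 in K^×, then {E(γ_1), E(γ_2)} is a set of two linearly independent rank-one matrices each trace-orthogonal to both I and M, where E(γ) = [[γ, 1], [−γ², −γ]]. -/
/-!
`E γ` is the outer product of `(1, -γ)` and `(γ, 1)`, hence of rank one, and it has trace zero.
Its Frobenius pairing `trace (E γ * Mᵀ)` with the companion matrix is `1 - a₁γ² - a₂γ`, which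
vanishes exactly at the roots. Two such matrices share the entry `1` in position `(0, 1)`, so
they are independent as soon as their `(0, 0)` entries `γ₁ ≠ γ₂` differ.
-/

open Matrix

namespace Matrix

variable {m n K : Type*} [Field K] [Fintype n]

theorem rank_eq_zero_iff {A : Matrix m n K} : A.rank = 0 ↔ A = 0 := by
  classical
  rw [rank, Submodule.finrank_eq_zero, LinearMap.range_eq_bot, ← toLin'_apply',
    LinearEquiv.map_eq_zero_iff]

theorem rank_vecMulVec_of_ne_zero {w : m → K} {v : n → K} (hw : w ≠ 0) (hv : v ≠ 0) :
    (vecMulVec w v).rank = 1 :=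
  le_antisymm (rank_vecMulVec_le w v)
    (Nat.one_le_iff_ne_zero.2 <| rank_eq_zero_iff.not.2 fun h => by
      obtain ⟨i, hi⟩ := Function.ne_iff.1 hw
      obtain ⟨j, hj⟩ := Function.ne_iff.1 hv
      exact mul_ne_zero hi hj congr($h i j))

end Matrix

section

variable {K : Type*} [Field K]

def E (γ : K) : Matrix (Fin 2) (Fin 2) K := !![γ, 1; -γ ^ 2, -γ]

theorem E_eq_vecMulVec (γ : K) : E γ = vecMulVec ![1, -γ] ![γ, 1] := by
  ext i j; fin_cases i <;> fin_cases j <;> simp [E, vecMulVec_apply, sq]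

theorem rank_E (γ : K) : (E γ).rank = 1 := by
  rw [E_eq_vecMulVec]
  exact rank_vecMulVec_of_ne_zero (fun h => by simpa using congrFun h 0)
    (fun h => by simpa using congrFun h 1)

theorem trace_E (γ : K) : trace (E γ) = 0 := by
  simp [E, trace_fin_two]

theorem trace_E_mul_transpose (a1 a2 γ : K) :
    trace (E γ * !![0, 1; a1, a2]ᵀ) = -(a1 * γ ^ 2 + a2 * γ - 1) := by
  rw [trace_fin_two]
  simp [E, mul_apply, Fin.sum_univ_two]
  ring

theorem linearIndependent_E {γ1 γ2 : K} (hne : γ1 ≠ γ2) : LinearIndependent K ![E γ1, E γ2] := by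
  refine LinearIndependent.pair_iff.2 fun s t hst => ?_
  have h01 : s + t = 0 := by simpa [E] using congrFun (congrFun hst 0) 1
  have h00 : s * γ1 + t * γ2 = 0 := by simpa [E] using congrFun (congrFun hst 0) 0
  have hs : s * (γ1 - γ2) = 0 := by linear_combination h00 - γ2 * h01
  have hs0 : s = 0 := (mul_eq_zero.1 hs).resolve_right (sub_ne_zero.2 hne)
  exact ⟨hs0, by linear_combination h01 - hs0⟩

end

theorem stmt13_general {K : Type*} [Field K] (a1 a2 γ1 γ2 : K)
    (hroot1 : a1 * γ1 ^ 2 + a2 * γ1 - 1 = 0) (hroot2 : a1 * γ2 ^ 2 + a2 * γ2 - 1 = 0)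
    (hne : γ1 ≠ γ2) :
    LinearIndependent K
      ![(!![γ1, 1; -γ1 ^ 2, -γ1] : Matrix (Fin 2) (Fin 2) K),
        (!![γ2, 1; -γ2 ^ 2, -γ2] : Matrix (Fin 2) (Fin 2) K)] ∧
    (!![γ1, 1; -γ1 ^ 2, -γ1] : Matrix (Fin 2) (Fin 2) K).rank = 1 ∧
    (!![γ2, 1; -γ2 ^ 2, -γ2] : Matrix (Fin 2) (Fin 2) K).rank = 1 ∧
    Matrix.trace (!![γ1, 1; -γ1 ^ 2, -γ1] * ((1 : Matrix (Fin 2) (Fin 2) K))ᵀ) = 0 ∧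
    Matrix.trace (!![γ1, 1; -γ1 ^ 2, -γ1] * (!![0, 1; a1, a2] : Matrix (Fin 2) (Fin 2) K)ᵀ) = 0 ∧
    Matrix.trace (!![γ2, 1; -γ2 ^ 2, -γ2] * ((1 : Matrix (Fin 2) (Fin 2) K))ᵀ) = 0 ∧
    Matrix.trace (!![γ2, 1; -γ2 ^ 2, -γ2] * (!![0, 1; a1, a2] : Matrix (Fin 2) (Fin 2) K)ᵀ) = 0 := by
  rw [transpose_one, mul_one, mul_one]
  exact ⟨linearIndependent_E hne, rank_E γ1, rank_E γ2,
    trace_E γ1, (trace_E_mul_transpose a1 a2 γ1).trans (by rw [hroot1, neg_zero]),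
    trace_E γ2, (trace_E_mul_transpose a1 a2 γ2).trans (by rw [hroot2, neg_zero])⟩

theorem stmt13 {K : Type*} [Field K] (a1 a2 γ1 γ2 : K) (ha : a1 ≠ 0)
    (hroot1 : a1 * γ1 ^ 2 + a2 * γ1 - 1 = 0) (hroot2 : a1 * γ2 ^ 2 + a2 * γ2 - 1 = 0)
    (hne : γ1 ≠ γ2) (hγ1 : γ1 ≠ 0) (hγ2 : γ2 ≠ 0) :
    LinearIndependent K
      ![(!![γ1, 1; -γ1 ^ 2, -γ1] : Matrix (Fin 2) (Fin 2) K),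
        (!![γ2, 1; -γ2 ^ 2, -γ2] : Matrix (Fin 2) (Fin 2) K)] ∧
    (!![γ1, 1; -γ1 ^ 2, -γ1] : Matrix (Fin 2) (Fin 2) K).rank = 1 ∧
    (!![γ2, 1; -γ2 ^ 2, -γ2] : Matrix (Fin 2) (Fin 2) K).rank = 1 ∧
    Matrix.trace (!![γ1, 1; -γ1 ^ 2, -γ1] * ((1 : Matrix (Fin 2) (Fin 2) K))ᵀ) = 0 ∧
    Matrix.trace (!![γ1, 1; -γ1 ^ 2, -γ1] * (!![0, 1; a1, a2] : Matrix (Fin 2) (Fin 2) K)ᵀ) = 0 ∧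
    Matrix.trace (!![γ2, 1; -γ2 ^ 2, -γ2] * ((1 : Matrix (Fin 2) (Fin 2) K))ᵀ) = 0 ∧
    Matrix.trace (!![γ2, 1; -γ2 ^ 2, -γ2] * (!![0, 1; a1, a2] : Matrix (Fin 2) (Fin 2) K)ᵀ) = 0 :=
  stmt13_general a1 a2 γ1 γ2 hroot1 hroot2 hne
end

section
/- Kruskal's tensor-rank bound for matrix codes: let C ≤ F_q^{n×m} be a nonzero subspace of dimension k whose every nonzero element has rank at least d. If C is contained in the span of R rank-one matrices, then R ≥ k + d − 1. -/
/-!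
Choose `min (d - 1) R` of the rank-one matrices. By subadditivity of rank, every matrix in their
span has rank at most `d - 1`, so this span meets `C` only in `0`. Hence `C` embeds into the span of
all `A i` modulo the chosen ones, which is spanned by the remaining `R - (d - 1)` matrices, giving
`k ≤ R - (d - 1)`; when `d - 1 > R` the same count forces `k = 0`, excluded by `C ≠ ⊥`.
-/

open Module Submodule

theorem Submodule.finrank_add_card_le_of_disjoint_span {K M ι : Type*} [Field K] [AddCommGroup M]
    [Module K M] [Fintype ι] {A : ι → M} {C : Submodule K M} (hC : C ≤ span K (Set.range A))
    {T : Finset ι} (hT : Disjoint C (span K (A '' T))) :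
    finrank K C + T.card ≤ Fintype.card ι := by
  classical
  set U := span K (A '' T)
  set W := span K (A '' ↑Tᶜ)
  have hUW : span K (Set.range A) = U ⊔ W := by
    rw [← span_union, ← Set.image_union, Finset.coe_compl, Set.union_compl_self, Set.image_univ]
  have : FiniteDimensional K U := FiniteDimensional.span_of_finite K (Set.toFinite _)
  have : FiniteDimensional K W := FiniteDimensional.span_of_finite K (Set.toFinite _)
  have : FiniteDimensional K C := finiteDimensional_of_le (hUW ▸ hC)
  have hW : finrank K W ≤ Fintype.card ι - T.card := by
    rw [← Finset.card_compl]
    have := finrank_span_finset_le_card (R := K) (Tᶜ.image A)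
    rw [Finset.coe_image] at this
    exact this.trans Finset.card_image_le
  have hCU : finrank K C + finrank K U ≤ finrank K U + finrank K W :=
    calc finrank K C + finrank K U = finrank K ↥(C ⊔ U) := by
          rw [← finrank_sup_add_finrank_inf_eq, hT.eq_bot, finrank_bot, add_zero]
      _ ≤ finrank K ↥(U ⊔ W) := finrank_mono (sup_le (hUW ▸ hC) le_sup_left)
      _ ≤ finrank K U + finrank K W := finrank_add_le_finrank_add_finrank U W
  have hTcard : T.card ≤ Fintype.card ι := T.card_le_univ
  omega

namespace Matrix

variable {K m n : Type*} [Field K] [Fintype n]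

theorem rank_add_le (X Y : Matrix m n K) : (X + Y).rank ≤ X.rank + Y.rank := by
  rw [rank, rank, rank, mulVecLin_add]
  exact (finrank_mono (LinearMap.range_add_le _ _)).trans (finrank_add_le_finrank_add_finrank _ _)

theorem rank_smul_le (c : K) (X : Matrix m n K) : (c • X).rank ≤ X.rank := by
  classical
  rw [rank, rank, ← toLin'_apply', map_smul]
  exact finrank_mono (LinearMap.range_smul_le_range _ _)

theorem rank_pos_of_ne_zero {X : Matrix m n K} (hX : X ≠ 0) : 0 < X.rank := by
  classical
  rw [rank, Nat.pos_iff_ne_zero, Ne, Submodule.finrank_eq_zero, LinearMap.range_eq_bot,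
    ← toLin'_apply', LinearEquiv.map_eq_zero_iff]
  exact hX

theorem rank_le_card_of_mem_span {ι : Type*} {A : ι → Matrix m n K} {T : Finset ι}
    (hA : ∀ i ∈ T, (A i).rank ≤ 1) {X : Matrix m n K} (hX : X ∈ span K (A '' T)) :
    X.rank ≤ T.card := by
  obtain ⟨c, rfl⟩ := (mem_span_image_finset_iff_exists_fun' K).1 hX
  calc (∑ i ∈ T, c i • A i).rank ≤ ∑ i ∈ T, (c i • A i).rank :=
        Finset.le_sum_of_subadditive _ rank_zero.le rank_add_le _ _
    _ ≤ ∑ i ∈ T, 1 := Finset.sum_le_sum fun i hi => (rank_smul_le _ _).trans (hA i hi)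
    _ = T.card := by simp

end Matrix

open Matrix

theorem stmt15_general {K : Type*} [Field K] {n m k d R : ℕ}
    (C : Submodule K (Matrix (Fin n) (Fin m) K)) (hC : C ≠ ⊥)
    (hk : Module.finrank K C = k)
    (hd : ∀ X ∈ C, X ≠ 0 → d ≤ X.rank)
    (A : Fin R → Matrix (Fin n) (Fin m) K) (hA : ∀ i, (A i).rank = 1)
    (hspan : C ≤ Submodule.span K (Set.range A)) :
    k + d - 1 ≤ R := by
  obtain ⟨T, -, hT⟩ := Finset.exists_subset_card_eq (s := (Finset.univ : Finset (Fin R)))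
    (n := min (d - 1) R) (by simp)
  have hdisj : Disjoint C (span K (A '' ↑T)) := by
    refine disjoint_def.2 fun X hXC hXT => by_contra fun hX => ?_
    have hdX := hd X hXC hX
    have hXr := rank_le_card_of_mem_span (fun i _ => (hA i).le) hXT
    have hX0 := rank_pos_of_ne_zero hX
    omega
  have hbound := finrank_add_card_le_of_disjoint_span hspan hdisj
  have hk0 : 0 < k := hk ▸ one_le_finrank_iff.2 hC
  rw [hk, hT, Fintype.card_fin] at hbound
  omega

/-- Kruskal's tensor-rank bound for matrix codes over a finite field `K = F_q`. -/
theorem stmt15 {K : Type*} [Field K] [Fintype K] {n m k d R : ℕ}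
    (C : Submodule K (Matrix (Fin n) (Fin m) K)) (hC : C ≠ ⊥)
    (hk : Module.finrank K C = k)
    (hd : ∀ X ∈ C, X ≠ 0 → d ≤ X.rank)
    (A : Fin R → Matrix (Fin n) (Fin m) K) (hA : ∀ i, (A i).rank = 1)
    (hspan : C ≤ Submodule.span K (Set.range A)) :
    k + d - 1 ≤ R :=
  stmt15_general C hC hk hd A hA hspan
end

section
/- Singleton-type bound for rank-metric codes: if C ≤ F_q^{n×m} (n ≤ m) is a subspace of dimension k over F_q in which every nonzero matrix has rank at least d, then k ≤ m(n − d + 1). -/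
open Matrix

/-- If the first `r` rows of a matrix vanish, its rank is at most the number of
remaining rows. -/
lemma rank_le_of_zero_rows {K : Type*} [Field K] {n m r : ℕ} (hr : r ≤ n)
    (X : Matrix (Fin n) (Fin m) K) (h0 : ∀ i : Fin n, (i : ℕ) < r → X i = 0) :
    X.rank ≤ n - r := by
  classical
  have hle : ∀ j : Fin (n - r), r + (j : ℕ) < n := fun j => by omega
  set g : Fin (n - r) → (Fin m → K) := fun j => X ⟨r + j, hle j⟩ with hg
  have hsub : Set.range X ⊆ (Submodule.span K (Set.range g) : Set (Fin m → K)) := by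
    rintro _ ⟨i, rfl⟩
    by_cases hi : (i : ℕ) < r
    · rw [h0 i hi]; exact Submodule.zero_mem _
    · push_neg at hi
      have hj : (i : ℕ) - r < n - r := by omega
      have hieq : i = (⟨r + ((⟨(i : ℕ) - r, hj⟩ : Fin (n - r)) : ℕ),
          hle _⟩ : Fin n) := by
        apply Fin.ext
        simp
        omega
      rw [hieq]
      exact Submodule.subset_span ⟨⟨(i : ℕ) - r, hj⟩, rfl⟩
  have hspan : Submodule.span K (Set.range X) ≤ Submodule.span K (Set.range g) :=
    Submodule.span_le.mpr hsub
  calc X.rank = Module.finrank K (Submodule.span K (Set.range X)) :=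
        X.rank_eq_finrank_span_row
    _ ≤ Module.finrank K (Submodule.span K (Set.range g)) := Submodule.finrank_mono hspan
    _ ≤ Fintype.card (Fin (n - r)) := finrank_range_le_card g
    _ = n - r := Fintype.card_fin _

/-- Singleton-type bound for rank-metric codes over a finite field `K = F_q`. -/
theorem stmt16 {K : Type*} [Field K] [Fintype K] {n m k d : ℕ}
    (hnm : n ≤ m) (hd1 : 1 ≤ d) (hdn : d ≤ n)
    (C : Submodule K (Matrix (Fin n) (Fin m) K))
    (hk : Module.finrank K C = k)
    (hd : ∀ X ∈ C, X ≠ 0 → d ≤ X.rank) :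
    k ≤ m * (n - d + 1) := by
  classical
  set r : ℕ := n - d + 1 with hrdef
  have hr : r ≤ n := by omega
  let φ : Matrix (Fin n) (Fin m) K →ₗ[K] Matrix (Fin r) (Fin m) K :=
    { toFun := fun X => X.submatrix (Fin.castLE hr) id
      map_add' := fun A B => rfl
      map_smul' := fun c A => rfl }
  let ψ : C →ₗ[K] Matrix (Fin r) (Fin m) K := φ.comp C.subtype
  have hinj : Function.Injective ψ := by
    rw [← LinearMap.ker_eq_bot, LinearMap.ker_eq_bot']
    intro x hx
    by_contra hne
    have hxC : (x : Matrix (Fin n) (Fin m) K) ∈ C := x.2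
    have hxne : (x : Matrix (Fin n) (Fin m) K) ≠ 0 := by
      intro h; exact hne (Subtype.ext h)
    have hdle := hd _ hxC hxne
    have h0 : ∀ i : Fin n, (i : ℕ) < r → (x : Matrix (Fin n) (Fin m) K) i = 0 := by
      intro i hi
      funext j
      have := congrFun (congrFun hx ⟨(i : ℕ), hi⟩) j
      simpa [ψ, φ, Matrix.submatrix, Fin.castLE, Fin.ext_iff] using this
    have hrank := rank_le_of_zero_rows hr _ h0
    omega
  have hfin : Module.finrank K C ≤ Module.finrank K (Matrix (Fin r) (Fin m) K) :=
    LinearMap.finrank_le_finrank_of_injective hinj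
  rw [hk] at hfin
  calc k ≤ Module.finrank K (Matrix (Fin r) (Fin m) K) := hfin
    _ = r * m := by
        rw [Module.finrank_matrix]; simp
    _ = m * (n - d + 1) := by rw [mul_comm]
end

section
/- Let α be a generator of F_{q^m}^× with companion matrix M ∈ F_q^{m×m} of its minimal polynomial over F_q, and let Γ be the basis {1, α, …, α^{m-1}}. For 1 ≤ s ≤ m−1, every nonzero matrix in the F_q-span of {Y_s M^i : 0 ≤ i ≤ m−1} has rank exactly s, where Y_s = (I_s | 0) ∈ F_q^{s×m}. -/
open Matrix

/-- The matrix `Y_s = (I_s | 0) ∈ K^{s×m}`. -/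
def Ys (K : Type*) [Field K] (s m : ℕ) : Matrix (Fin s) (Fin m) K :=
  Matrix.of fun i j => if (i : ℕ) = (j : ℕ) then 1 else 0

/-!
In the power basis `1, α, …, α^{m-1}` the companion matrix `M` is the transposed matrix `L_αᵀ` of
multiplication by `α`, so `y ↦ Y_s L_yᵀ` is a `K`-linear map from `L` whose image contains every
`Y_s M^i` and hence their span. For `y ≠ 0` the matrix `L_y` is invertible, so
`rank (Y_s L_yᵀ) = rank Y_s = s`.
-/

section Ys

variable {K : Type*} [Field K] {s m : ℕ}

theorem Ys_eq_submatrix_one (h : s ≤ m) :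
    Ys K s m = (1 : Matrix (Fin m) (Fin m) K).submatrix (Fin.castLE h) id := by
  ext i j
  simp [Ys, one_apply, Fin.ext_iff]

theorem Ys_mul_transpose_Ys (h : s ≤ m) : Ys K s m * (Ys K s m)ᵀ = 1 := by
  rw [Ys_eq_submatrix_one h, transpose_submatrix, transpose_one,
    ← submatrix_mul _ _ _ _ _ Function.bijective_id, Matrix.mul_one]
  exact submatrix_one _ (Fin.castLE_injective h)

theorem rank_Ys (h : s ≤ m) : (Ys K s m).rank = s :=
  le_antisymm ((rank_le_card_height _).trans (by simp)) <| by
    simpa [Ys_mul_transpose_Ys h] using rank_mul_le_left (Ys K s m) (Ys K s m)ᵀ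

end Ys

section LeftMulMatrix

variable {K L : Type*} [Field K] [Field L] [Algebra K L]

open Algebra

theorem PowerBasis.companionMat_eq_transpose_leftMulMatrix (pb : PowerBasis K L) :
    companionMat (fun j : Fin pb.dim => -(minpoly K pb.gen).coeff j) =
      (leftMulMatrix pb.basis pb.gen)ᵀ := by
  ext i j
  simp [companionMat, pb.leftMulMatrix]

noncomputable def truncatedMulMatrix (s : ℕ) {m : ℕ} (b : Module.Basis (Fin m) K L) :
    L →ₗ[K] Matrix (Fin s) (Fin m) K :=
  mulLeftLinearMap (Fin m) K (Ys K s m) ∘ₗ (transposeLinearEquiv _ _ K K).toLinearMap ∘ₗ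
    (leftMulMatrix b).toLinearMap

theorem truncatedMulMatrix_apply {s m : ℕ} (b : Module.Basis (Fin m) K L) (y : L) :
    truncatedMulMatrix s b y = Ys K s m * (leftMulMatrix b y)ᵀ := rfl

theorem rank_truncatedMulMatrix {s m : ℕ} (b : Module.Basis (Fin m) K L) (h : s ≤ m) {y : L}
    (hy : y ≠ 0) : (truncatedMulMatrix s b y).rank = s := by
  have hdet : IsUnit (leftMulMatrix b y)ᵀ.det := by
    rw [det_transpose, ← isUnit_iff_isUnit_det]
    exact (isUnit_iff_ne_zero.mpr hy).map (leftMulMatrix b)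
  rw [truncatedMulMatrix_apply, rank_mul_eq_left_of_isUnit_det _ _ hdet, rank_Ys h]

theorem span_Ys_mul_pow_le_range_truncatedMulMatrix (s : ℕ) {m : ℕ}
    (b : Module.Basis (Fin m) K L) (α : L) :
    Submodule.span K {X | ∃ i < m, X = Ys K s m * (leftMulMatrix b α)ᵀ ^ i} ≤
      LinearMap.range (truncatedMulMatrix s b) := by
  refine Submodule.span_le.mpr ?_
  rintro _ ⟨i, -, rfl⟩
  exact ⟨α ^ i, by rw [truncatedMulMatrix_apply, map_pow, transpose_pow]⟩

end LeftMulMatrix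

theorem stmt17_general {K L : Type*} [Field K] [Field L] [Algebra K L]
    {m : ℕ} (hm : Module.finrank K L = m) (α : L)
    (hα : ∀ x : L, x ≠ 0 → ∃ n : ℕ, α ^ n = x)
    (s : ℕ) (hs1 : 1 ≤ s) (hsm : s ≤ m - 1) :
    ∀ N ∈ Submodule.span K {X : Matrix (Fin s) (Fin m) K |
        ∃ i < m, X = Ys K s m * (companionMat fun j : Fin m => -(minpoly K α).coeff j) ^ i},
      N ≠ 0 → N.rank = s := by
  -- `finrank` is `0` on infinite-dimensional spaces, so `1 ≤ s ≤ m - 1` forces finiteness.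
  have : Module.Finite K L := Module.finite_of_finrank_pos (by omega)
  have hadj : Algebra.adjoin K {α} = ⊤ := _root_.eq_top_iff.mpr fun x _ => by
    rcases eq_or_ne x 0 with rfl | hx
    · exact zero_mem _
    · obtain ⟨n, rfl⟩ := hα x hx
      exact pow_mem (Algebra.self_mem_adjoin_singleton K α) n
  obtain ⟨pb, rfl⟩ : ∃ pb : PowerBasis K L, pb.gen = α :=
    ⟨PowerBasis.ofAdjoinEqTop (IsIntegral.of_finite K α) hadj, rfl⟩
  obtain rfl : pb.dim = m := pb.finrank.symm.trans hm
  intro N hN hN0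
  rw [pb.companionMat_eq_transpose_leftMulMatrix] at hN
  obtain ⟨y, rfl⟩ := span_Ys_mul_pow_le_range_truncatedMulMatrix s pb.basis pb.gen hN
  exact rank_truncatedMulMatrix pb.basis (hsm.trans (Nat.sub_le _ _)) (by rintro rfl; simp at hN0)

/-- `L = F_{q^m}` is a degree-`m` extension of the finite field `K = F_q`, `α` generates
`Lˣ`, and `M` is the companion matrix of the minimal polynomial of `α` over `K` (the bottom
row consists of the negated coefficients).  Every nonzero matrix in the `K`-span of
`{Y_s M^i : 0 ≤ i ≤ m-1}` has rank exactly `s`. -/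
theorem stmt17 {K L : Type*} [Field K] [Field L] [Algebra K L] [Fintype K] [Fintype L]
    {m : ℕ} (hm : Module.finrank K L = m) (α : L)
    (hα : ∀ x : L, x ≠ 0 → ∃ n : ℕ, α ^ n = x)
    (s : ℕ) (hs1 : 1 ≤ s) (hsm : s ≤ m - 1) :
    ∀ N ∈ Submodule.span K {X : Matrix (Fin s) (Fin m) K |
        ∃ i < m, X = Ys K s m * (companionMat fun j : Fin m => -(minpoly K α).coeff j) ^ i},
      N ≠ 0 → N.rank = s :=
  stmt17_general hm α hα s hs1 hsm
end
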